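/- Fix α ∈ (0,1] and let X := {(x,y) ∈ ℝ² : x ≥ 0 and |y| ≤ x^α}, endowed with the Euclidean metric of ℝ². Then d∞(X) = α + 1. -/

import Mathlib

/-!
A ball of radius `R` in the horn `{0 ≤ x, |y| ≤ x ^ α}` is, up to constants, the region
`0 ≤ x ≲ R, |y| ≤ x ^ α`, of area `≍ R ^ (α + 1)`. For fixed `r`, a grid of mesh `r / 4` covers it
by `O(R ^ (α + 1))` balls of radius `r`, while a `2r`-separated grid inside it has
`Ω(R ^ (α + 1))` points, no two of which lie in one ball of radius `r`. Hence
`log n_r(B(x₀, R)) / log R → α + 1` for every `r` and every base point `x₀`.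
-/

open Metric Filter Topology Set

/-- Logarithm of an extended natural number, valued in `EReal` (`⊤` for `⊤`). -/
noncomputable def elog (n : ℕ∞) : EReal :=
  if n = ⊤ then ⊤ else ((Real.log (n.toNat : ℝ) : ℝ) : EReal)

/-- `coverNum r Ω` : the least number of open balls of radius `r` needed to cover `Ω`,
valued in `ℕ∞` (it is `⊤` if no finite cover exists). -/
noncomputable def coverNum {X : Type*} [MetricSpace X] (r : ℝ) (Ω : Set X) : ℕ∞ :=
  sInf ((fun s : Finset X => (s.card : ℕ∞)) ''
    {s : Finset X | Ω ⊆ ⋃ x ∈ s, Metric.ball x r})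

/-- The asymptotic dimension with base point `x`:
`d∞(X) = lim_{r→∞} limsup_{R→∞} log n_r(B(x,R)) / log R`; the limit in `r` exists since the
inner expression is nonincreasing in `r`, hence equals the infimum over `r > 0`. -/
noncomputable def asympDim {X : Type*} [MetricSpace X] (x : X) : EReal :=
  ⨅ (r : ℝ) (_ : 0 < r),
    Filter.limsup (fun R : ℝ => ((Real.log R)⁻¹ : EReal) * elog (coverNum r (Metric.ball x R)))
      Filter.atTop

/-- The asymptotic dimension of a metric space (independent of the base point). -/
noncomputable def asympDimSpace (X : Type*) [MetricSpace X] : EReal :=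
  ⨆ x : X, asympDim x

section CoverNum

variable {X : Type*} [MetricSpace X]

lemma coverNum_le_card {r : ℝ} {Ω : Set X} {s : Finset X} (h : Ω ⊆ ⋃ x ∈ s, ball x r) :
    coverNum r Ω ≤ s.card :=
  sInf_le ⟨s, h, rfl⟩

lemma card_le_coverNum_of_pairwise_le_dist {r : ℝ} {Ω : Set X} {t : Finset X} (htΩ : ↑t ⊆ Ω)
    (hsep : (t : Set X).Pairwise fun p q => 2 * r ≤ dist p q) :
    (t.card : ℕ∞) ≤ coverNum r Ω := by
  refine le_sInf ?_
  rintro _ ⟨s, hs, rfl⟩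
  have hcenter : ∀ p ∈ t, ∃ c ∈ s, p ∈ ball c r := fun p hp => by simpa using hs (htΩ hp)
  choose! c hcs hpc using hcenter
  have hinj : Set.InjOn c t := by
    intro p hp q hq hpq
    by_contra hne
    have hclose : dist p q < 2 * r := by
      have hq' := mem_ball.1 (hpc q hq)
      rw [← hpq] at hq'
      linarith [dist_triangle_right p q (c p), mem_ball.1 (hpc p hp)]
    exact (hsep hp hq hne).not_gt hclose
  exact Nat.cast_le.2 (Finset.card_le_card_of_injOn c hcs hinj)

/-- Centers of a cover of radius `r / 2` taken in the ambient space can be moved into the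
subspace at the cost of doubling the radius. -/
lemma coverNum_subtype_le_card {s : Set X} {Ω : Set s} {r : ℝ} (F : Finset X)
    (hF : ∀ ω ∈ Ω, ∃ c ∈ F, dist (ω : X) c < r / 2) : coverNum r Ω ≤ F.card := by
  classical
  rcases Ω.eq_empty_or_nonempty with rfl | ⟨ω₀, -⟩
  · exact (coverNum_le_card (s := ∅) (by simp)).trans (by simp)
  let g : X → s := fun c => if h : ∃ ω ∈ Ω, dist (ω : X) c < r / 2 then h.choose else ω₀
  refine (coverNum_le_card (s := F.image g) ?_).trans (by exact_mod_cast Finset.card_image_le)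
  intro ω hω
  obtain ⟨c, hcF, hc⟩ := hF ω hω
  have hex : ∃ ω ∈ Ω, dist (ω : X) c < r / 2 := ⟨ω, hω, hc⟩
  have hg : dist (g c : X) c < r / 2 := by simp only [g, dif_pos hex]; exact hex.choose_spec.2
  refine mem_iUnion₂.2 ⟨g c, Finset.mem_image_of_mem g hcF, ?_⟩
  rw [mem_ball, Subtype.dist_eq]
  linarith [dist_triangle_right (ω : X) (g c : X) c]

end CoverNum

/-- A `δ`-net of `[a, b]` that is also `δ`-separated. -/
noncomputable def gridPoints (a b δ : ℝ) : Finset ℝ :=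
  (Finset.range (⌊(b - a) / δ⌋₊ + 1)).image fun k : ℕ => a + k * δ

section GridPoints

variable {a b δ : ℝ}

lemma card_gridPoints (hδ : 0 < δ) : (gridPoints a b δ).card = ⌊(b - a) / δ⌋₊ + 1 := by
  rw [gridPoints, Finset.card_image_of_injective _ fun k l h => by simpa [hδ.ne'] using h,
    Finset.card_range]

lemma div_le_card_gridPoints (hδ : 0 < δ) : (b - a) / δ ≤ (gridPoints a b δ).card := by
  rw [card_gridPoints hδ]
  push_cast
  exact (Nat.lt_floor_add_one _).le

lemma card_gridPoints_le (hδ : 0 < δ) (hab : a ≤ b) :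
    ((gridPoints a b δ).card : ℝ) ≤ (b - a) / δ + 1 := by
  rw [card_gridPoints hδ]
  push_cast
  gcongr
  exact Nat.floor_le (div_nonneg (sub_nonneg.2 hab) hδ.le)

lemma mem_Icc_of_mem_gridPoints (hδ : 0 < δ) (hab : a ≤ b) {t : ℝ}
    (ht : t ∈ gridPoints a b δ) : t ∈ Icc a b := by
  obtain ⟨k, hk, rfl⟩ := Finset.mem_image.1 ht
  have hkb : (k : ℝ) ≤ (b - a) / δ :=
    (Nat.cast_le.2 (Nat.lt_succ_iff.1 (Finset.mem_range.1 hk))).trans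
      (Nat.floor_le (div_nonneg (sub_nonneg.2 hab) hδ.le))
  rw [le_div_iff₀ hδ] at hkb
  constructor <;> nlinarith [k.cast_nonneg (α := ℝ)]

lemma exists_mem_gridPoints_abs_sub_lt (hδ : 0 < δ) {x : ℝ} (hx : x ∈ Icc a b) :
    ∃ t ∈ gridPoints a b δ, |x - t| < δ := by
  set k := ⌊(x - a) / δ⌋₊
  have hxa : 0 ≤ (x - a) / δ := div_nonneg (sub_nonneg.2 hx.1) hδ.le
  have hk : k ∈ Finset.range (⌊(b - a) / δ⌋₊ + 1) :=
    Finset.mem_range.2 (Nat.lt_succ_of_le (Nat.floor_le_floor (by gcongr; exact hx.2)))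
  refine ⟨a + k * δ, Finset.mem_image_of_mem _ hk, abs_lt.2 ⟨?_, ?_⟩⟩
  · have := Nat.floor_le hxa
    rw [le_div_iff₀ hδ] at this
    linarith
  · have := Nat.lt_floor_add_one ((x - a) / δ)
    rw [div_lt_iff₀ hδ] at this
    linarith

lemma le_abs_sub_of_mem_gridPoints (hδ : 0 < δ) {s t : ℝ} (hs : s ∈ gridPoints a b δ)
    (ht : t ∈ gridPoints a b δ) (hst : s ≠ t) : δ ≤ |s - t| := by
  obtain ⟨k, -, rfl⟩ := Finset.mem_image.1 hs
  obtain ⟨l, -, rfl⟩ := Finset.mem_image.1 ht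
  have hkl : k ≠ l := by rintro rfl; exact hst rfl
  rcases hkl.lt_or_gt with hkl | hkl
  · have : (k : ℝ) + 1 ≤ l := by exact_mod_cast hkl
    rw [abs_sub_comm]
    exact le_abs.2 (Or.inl (by nlinarith))
  · have : (l : ℝ) + 1 ≤ k := by exact_mod_cast hkl
    exact le_abs.2 (Or.inl (by nlinarith))

end GridPoints

local notation "ℝ²" => EuclideanSpace ℝ (Fin 2)

lemma abs_sub_apply_le_dist (p q : ℝ²) (i : Fin 2) : |p i - q i| ≤ dist p q :=
  (Real.dist_eq _ _).symm.trans_le (PiLp.dist_apply_le p q i)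

lemma dist_le_abs_add_abs (p q : ℝ²) : dist p q ≤ |p 0 - q 0| + |p 1 - q 1| := by
  rw [EuclideanSpace.dist_eq, Fin.sum_univ_two, Real.dist_eq, Real.dist_eq, Real.sqrt_le_iff]
  refine ⟨by positivity, ?_⟩
  nlinarith [abs_nonneg (p 0 - q 0), abs_nonneg (p 1 - q 1), sq_abs (p 0 - q 0),
    sq_abs (p 1 - q 1)]

noncomputable def grid (G₁ G₂ : Finset ℝ) : Finset ℝ² :=
  (G₁ ×ˢ G₂).image fun st => !₂[st.1, st.2]

section Grid

variable {G₁ G₂ : Finset ℝ}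

lemma mem_grid {q : ℝ²} : q ∈ grid G₁ G₂ ↔ q 0 ∈ G₁ ∧ q 1 ∈ G₂ := by
  constructor
  · rintro h
    obtain ⟨⟨s, t⟩, hst, rfl⟩ := Finset.mem_image.1 h
    simpa using hst
  · rintro ⟨h₀, h₁⟩
    refine Finset.mem_image.2 ⟨(q 0, q 1), Finset.mem_product.2 ⟨h₀, h₁⟩, ?_⟩
    ext i
    fin_cases i <;> rfl

lemma card_grid : (grid G₁ G₂).card = G₁.card * G₂.card := by
  rw [grid, Finset.card_image_of_injective, Finset.card_product]
  rintro ⟨s, t⟩ ⟨s', t'⟩ h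
  have h₀ := congrArg (· 0) h
  have h₁ := congrArg (· 1) h
  simp_all

variable {a b c d δ : ℝ}

lemma exists_mem_grid_dist_lt (hδ : 0 < δ) {p : ℝ²} (h₀ : p 0 ∈ Icc a b) (h₁ : p 1 ∈ Icc c d) :
    ∃ q ∈ grid (gridPoints a b δ) (gridPoints c d δ), dist p q < 2 * δ := by
  obtain ⟨s, hs, hps⟩ := exists_mem_gridPoints_abs_sub_lt hδ h₀
  obtain ⟨t, ht, hpt⟩ := exists_mem_gridPoints_abs_sub_lt hδ h₁
  refine ⟨!₂[s, t], mem_grid.2 ⟨hs, ht⟩, ?_⟩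
  calc dist p !₂[s, t] ≤ |p 0 - s| + |p 1 - t| := dist_le_abs_add_abs _ _
    _ < 2 * δ := by linarith

lemma le_dist_of_mem_grid (hδ : 0 < δ) {p q : ℝ²} (hp : p ∈ grid (gridPoints a b δ) (gridPoints c d δ))
    (hq : q ∈ grid (gridPoints a b δ) (gridPoints c d δ)) (hpq : p ≠ q) : δ ≤ dist p q := by
  rw [mem_grid] at hp hq
  by_cases h₀ : p 0 = q 0
  · have h₁ : p 1 ≠ q 1 := fun h₁ => hpq (by ext i; fin_cases i; exacts [h₀, h₁])
    exact (le_abs_sub_of_mem_gridPoints hδ hp.2 hq.2 h₁).trans (abs_sub_apply_le_dist p q 1)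
  · exact (le_abs_sub_of_mem_gridPoints hδ hp.1 hq.1 h₀).trans (abs_sub_apply_le_dist p q 0)

end Grid

lemma inv_log_mul_log_mul_rpow {a R : ℝ} (d : ℝ) (ha : 0 < a) (hR : 1 < R) :
    (Real.log R)⁻¹ * Real.log (a * R ^ d) = (Real.log R)⁻¹ * Real.log a + d := by
  have hlog : Real.log R ≠ 0 := (Real.log_pos hR).ne'
  rw [Real.log_mul ha.ne' (Real.rpow_pos_of_pos (by linarith) d).ne',
    Real.log_rpow (by linarith)]
  field_simp

lemma limsup_inv_log_mul_elog_eq {f : ℝ → ℕ∞} {c C d : ℝ} (hc : 0 < c)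
    (hlow : ∀ᶠ R in atTop, ∃ N : ℕ, (N : ℕ∞) ≤ f R ∧ c * R ^ d ≤ N)
    (hup : ∀ᶠ R in atTop, ∃ N : ℕ, f R ≤ N ∧ (N : ℝ) ≤ C * R ^ d) :
    limsup (fun R => ((Real.log R)⁻¹ : EReal) * elog (f R)) atTop = d := by
  set u : ℝ → ℝ := fun R => (Real.log R)⁻¹ * Real.log (f R).toNat
  have hfu : ∀ᶠ R in atTop, ((Real.log R)⁻¹ : EReal) * elog (f R) = u R := by
    filter_upwards [hup] with R hR
    obtain ⟨N, hfN, -⟩ := hR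
    rw [elog, if_neg (ne_top_of_le_ne_top (ENat.natCast_ne_top N) hfN)]
    rfl
  have hbounds : ∀ᶠ R in atTop, (Real.log R)⁻¹ * Real.log c + d ≤ u R ∧
      u R ≤ (Real.log R)⁻¹ * Real.log C + d := by
    filter_upwards [hlow, hup, eventually_gt_atTop 1] with R hRlow hRup hR
    obtain ⟨N₁, hN₁f, hcN₁⟩ := hRlow
    obtain ⟨N₂, hfN₂, hN₂C⟩ := hRup
    have hfin : f R ≠ ⊤ := ne_top_of_le_ne_top (ENat.natCast_ne_top N₂) hfN₂
    have hpos : 0 < c * R ^ d := mul_pos hc (Real.rpow_pos_of_pos (by linarith) d)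
    have hlow' : c * R ^ d ≤ (f R).toNat :=
      hcN₁.trans (Nat.cast_le.2 (by simpa using ENat.toNat_le_toNat hN₁f hfin))
    have hup' : ((f R).toNat : ℝ) ≤ C * R ^ d :=
      (Nat.cast_le.2 (ENat.toNat_le_of_le_natCast hfN₂)).trans hN₂C
    have hinv : 0 ≤ (Real.log R)⁻¹ := inv_nonneg.2 (Real.log_pos hR).le
    have hC : 0 < C :=
      pos_of_mul_pos_left (hpos.trans_le (hlow'.trans hup')) (Real.rpow_nonneg (by linarith) d)
    constructor
    · rw [← inv_log_mul_log_mul_rpow d hc hR]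
      exact mul_le_mul_of_nonneg_left (Real.log_le_log hpos hlow') hinv
    · rw [← inv_log_mul_log_mul_rpow d hC hR]
      exact mul_le_mul_of_nonneg_left (Real.log_le_log (hpos.trans_le hlow') hup') hinv
  have hlim : ∀ a : ℝ, Tendsto (fun R => (Real.log R)⁻¹ * Real.log a + d) atTop (𝓝 d) := by
    intro a
    simpa using (Real.tendsto_log_atTop.inv_tendsto_atTop.mul_const (Real.log a)).add_const d
  have hu : Tendsto u atTop (𝓝 d) :=
    tendsto_of_tendsto_of_tendsto_of_le_of_le' (hlim c) (hlim C) (hbounds.mono fun _ h => h.1)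
      (hbounds.mono fun _ h => h.2)
  exact (limsup_congr hfu).trans ((continuous_coe_real_ereal.tendsto _).comp hu).limsup_eq

def horn (α : ℝ) : Set ℝ² := {p | 0 ≤ p 0 ∧ |p 1| ≤ (p 0) ^ α}

section Horn

variable {α r R : ℝ}

/-- A ball of radius `R` about `x₀` in the horn lies in the box `[0, h] × [-h ^ α, h ^ α]` with
`h = x₀ 0 + R`, which a grid of mesh `r / 4` covers within distance `r / 2`. -/
lemma coverNum_ball_horn_le_card (hα₀ : 0 < α) (hr : 0 < r) (x₀ : horn α) :
    coverNum r (ball x₀ R) ≤ (grid (gridPoints 0 (x₀.1 0 + R) (r / 4))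
      (gridPoints (-(x₀.1 0 + R) ^ α) ((x₀.1 0 + R) ^ α) (r / 4))).card := by
  refine coverNum_subtype_le_card _ fun p hp => ?_
  have hpx : p.1 0 ≤ x₀.1 0 + R := by
    have := (abs_sub_apply_le_dist p.1 x₀.1 0).trans_lt hp
    linarith [le_abs_self (p.1 0 - x₀.1 0)]
  have hpy : |p.1 1| ≤ (x₀.1 0 + R) ^ α :=
    p.2.2.trans (Real.rpow_le_rpow p.2.1 hpx hα₀.le)
  obtain ⟨q, hq, hpq⟩ := exists_mem_grid_dist_lt (by positivity : (0 : ℝ) < r / 4)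
    (⟨p.2.1, hpx⟩ : p.1 0 ∈ Icc 0 (x₀.1 0 + R)) (abs_le.1 hpy)
  exact ⟨q, hq, by linarith⟩

lemma eventually_coverNum_ball_horn_le (hα₀ : 0 < α) (hr : 0 < r) (x₀ : horn α) :
    ∃ C, ∀ᶠ R in atTop, ∃ N : ℕ, coverNum r (ball x₀ R) ≤ N ∧ (N : ℝ) ≤ C * R ^ (α + 1) := by
  set δ := r / 4
  have hδ : 0 < δ := by positivity
  refine ⟨(2 / δ + 1) * (2 * 2 ^ α / δ + 1), ?_⟩
  filter_upwards [eventually_ge_atTop (x₀.1 0), eventually_ge_atTop 1] with R hRx hR1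
  refine ⟨_, coverNum_ball_horn_le_card hα₀ hr x₀, ?_⟩
  set h := x₀.1 0 + R
  have hh : 0 ≤ h := add_nonneg x₀.2.1 (by linarith)
  have hhα : h ^ α ≤ 2 ^ α * R ^ α := by
    rw [← Real.mul_rpow zero_le_two (by linarith)]
    exact Real.rpow_le_rpow hh (by linarith) hα₀.le
  have hRα : 1 ≤ R ^ α := Real.one_le_rpow hR1 hα₀.le
  have hx : (h - 0) / δ + 1 ≤ (2 / δ + 1) * R := by
    have : h / δ ≤ 2 / δ * R := by rw [div_mul_eq_mul_div]; gcongr; linarith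
    rw [sub_zero, add_mul, one_mul]
    linarith
  have hy : (h ^ α - -h ^ α) / δ + 1 ≤ (2 * 2 ^ α / δ + 1) * R ^ α := by
    have : (h ^ α - -h ^ α) / δ ≤ 2 * 2 ^ α / δ * R ^ α := by
      rw [div_mul_eq_mul_div, sub_neg_eq_add, ← two_mul, mul_assoc]
      gcongr
    rw [add_mul, one_mul]
    linarith
  rw [card_grid, Nat.cast_mul, Real.rpow_add_one (by positivity)]
  have hcardy := card_gridPoints_le hδ (by linarith [Real.rpow_nonneg hh α] : -h ^ α ≤ h ^ α)
  calc _ ≤ ((h - 0) / δ + 1) * ((h ^ α - -h ^ α) / δ + 1) :=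
        mul_le_mul (card_gridPoints_le hδ hh) hcardy (Nat.cast_nonneg _) (by positivity)
    _ ≤ ((2 / δ + 1) * R) * ((2 * 2 ^ α / δ + 1) * R ^ α) :=
        mul_le_mul hx hy ((Nat.cast_nonneg _).trans hcardy)
          (mul_nonneg (by positivity) (by linarith))
    _ = _ := by ring

/-- The grid lies in the horn (as `(R / 4) ^ α ≤ x ^ α`) and in the ball (as `(R / 4) ^ α ≤ R / 4`),
and no ball of radius `r` contains two of its `2r`-separated points. -/
lemma card_le_coverNum_ball_horn (hα₀ : 0 < α) (hα₁ : α ≤ 1) (hr : 0 < r) (x₀ : horn α)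
    (hR : 4 ≤ R) (hx₀ : ‖x₀.1‖ < R / 4) :
    ((grid (gridPoints (R / 4) (R / 2) (2 * r)) (gridPoints 0 ((R / 4) ^ α) (2 * r))).card : ℕ∞) ≤
      coverNum r (ball x₀ R) := by
  classical
  set G := grid (gridPoints (R / 4) (R / 2) (2 * r)) (gridPoints 0 ((R / 4) ^ α) (2 * r))
  have h2r : 0 < 2 * r := by positivity
  have hRα : (R / 4) ^ α ≤ R / 4 := Real.rpow_le_self_of_one_le (by linarith) hα₁
  have hbox : ∀ q ∈ G, q 0 ∈ Icc (R / 4) (R / 2) ∧ q 1 ∈ Icc 0 ((R / 4) ^ α) := fun q hq =>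
    ⟨mem_Icc_of_mem_gridPoints h2r (by linarith) (mem_grid.1 hq).1,
      mem_Icc_of_mem_gridPoints h2r (by positivity) (mem_grid.1 hq).2⟩
  have hhorn : ∀ q ∈ G, q ∈ horn α := by
    intro q hq
    obtain ⟨⟨hq0, -⟩, hq1, hq1'⟩ := hbox q hq
    refine ⟨by linarith, ?_⟩
    rw [abs_of_nonneg hq1]
    exact hq1'.trans (Real.rpow_le_rpow (by linarith) hq0 hα₀.le)
  have hball : ∀ q ∈ G, dist q x₀.1 < R := by
    intro q hq
    obtain ⟨⟨hq0, hq0'⟩, hq1, hq1'⟩ := hbox q hq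
    have := dist_le_abs_add_abs q 0
    simp only [PiLp.zero_apply, sub_zero, dist_zero_right] at this
    calc dist q x₀.1 ≤ ‖q‖ + ‖x₀.1‖ := dist_le_norm_add_norm q x₀.1
      _ < R := by rw [abs_of_nonneg (by linarith), abs_of_nonneg hq1] at this; linarith
  have hcard : (G.subtype (· ∈ horn α)).card = G.card := by
    rw [Finset.card_subtype, Finset.filter_true_of_mem hhorn]
  rw [← hcard]
  refine card_le_coverNum_of_pairwise_le_dist (fun q hq => ?_) fun q hq q' hq' hne => ?_
  · exact mem_ball.2 (hball q (Finset.mem_subtype.1 hq))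
  · show 2 * r ≤ dist q q'
    rw [Subtype.dist_eq]
    exact le_dist_of_mem_grid h2r (Finset.mem_subtype.1 hq) (Finset.mem_subtype.1 hq')
      (Subtype.coe_injective.ne hne)

lemma eventually_le_coverNum_ball_horn (hα₀ : 0 < α) (hα₁ : α ≤ 1) (hr : 0 < r) (x₀ : horn α) :
    ∃ c > 0, ∀ᶠ R in atTop, ∃ N : ℕ, (N : ℕ∞) ≤ coverNum r (ball x₀ R) ∧ c * R ^ (α + 1) ≤ N := by
  refine ⟨((4 : ℝ) ^ (α + 1) * (2 * r) ^ 2)⁻¹, by positivity, ?_⟩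
  filter_upwards [eventually_ge_atTop 4, eventually_gt_atTop (4 * ‖x₀.1‖)] with R hR hRx
  refine ⟨_, card_le_coverNum_ball_horn hα₀ hα₁ hr x₀ hR (by linarith), ?_⟩
  have h2r : 0 < 2 * r := by positivity
  rw [card_grid, Nat.cast_mul]
  calc _ = (R / 4) / (2 * r) * ((R / 4) ^ α / (2 * r)) := by
        rw [Real.rpow_add_one (by positivity), Real.div_rpow (by positivity) (by norm_num),
          Real.rpow_add_one (by positivity)]
        field_simp
    _ ≤ _ := by
        gcongr
        · have := div_le_card_gridPoints (a := R / 4) (b := R / 2) h2r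
          rwa [show R / 2 - R / 4 = R / 4 by ring] at this
        · simpa using div_le_card_gridPoints (a := 0) (b := (R / 4) ^ α) h2r

end Horn

lemma asympDim_horn {α : ℝ} (hα₀ : 0 < α) (hα₁ : α ≤ 1) (x₀ : horn α) :
    asympDim x₀ = ((α + 1 : ℝ) : EReal) := by
  have hlimsup : ∀ r > 0, limsup (fun R : ℝ => ((Real.log R)⁻¹ : EReal) *
      elog (coverNum r (ball x₀ R))) atTop = ((α + 1 : ℝ) : EReal) := fun r hr => by
    obtain ⟨c, hc, hlow⟩ := eventually_le_coverNum_ball_horn hα₀ hα₁ hr x₀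
    obtain ⟨C, hup⟩ := eventually_coverNum_ball_horn_le hα₀ hr x₀
    exact limsup_inv_log_mul_elog_eq hc hlow hup
  calc asympDim x₀ = ⨅ (r : ℝ) (_ : r ∈ Ioi 0), ((α + 1 : ℝ) : EReal) :=
        iInf_congr fun r => iInf_congr fun hr => hlimsup r hr
    _ = ((α + 1 : ℝ) : EReal) := biInf_const nonempty_Ioi

/-- Example 1.2.17: the region `X = {(x,y) ∈ ℝ² : x ≥ 0, |y| ≤ x^α}` with the Euclidean
metric has asymptotic dimension `α + 1`, for `α ∈ (0,1]`. -/
theorem stmt18 (α : ℝ) (hα₀ : 0 < α) (hα₁ : α ≤ 1) :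
    asympDimSpace
      ↥{p : EuclideanSpace ℝ (Fin 2) | 0 ≤ p 0 ∧ |p 1| ≤ (p 0) ^ α} =
    ((α + 1 : ℝ) : EReal) := by
  have : Nonempty (horn α) := ⟨⟨0, le_rfl, by simp [Real.zero_rpow hα₀.ne']⟩⟩
  exact (iSup_congr (asympDim_horn hα₀ hα₁)).trans ciSup_const
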